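/- Let n be a positive integer, A a nonsingular real n×n matrix, δ > 0 with δ ≤ σ_min(A), b a real n-vector, and let y, z be real n-vectors with x̂ = y + z. Then for every index i, |z_i| − δ⁻¹·‖b − A·x̂‖ ≤ |(A⁻¹·b − y)_i| ≤ |z_i| + δ⁻¹·‖b − A·x̂‖. -/

import Mathlib

open Matrix

/-- Euclidean norm of a real vector. -/
noncomputable def eNorm {m : Type*} [Fintype m] (v : m → ℝ) : ℝ :=
  Real.sqrt (∑ i, (v i) ^ 2)

/-- Smallest singular value of a real square matrix: the square root of the
smallest eigenvalue of `AᵀA`. -/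
noncomputable def sigmaMin {n : ℕ} (A : Matrix (Fin n) (Fin n) ℝ) : ℝ :=
  Real.sqrt (⨅ i, (by simpa using Matrix.isHermitian_conjTranspose_mul_self A :
      (Aᵀ * A).IsHermitian).eigenvalues i)

lemma mulVec_dot {n : ℕ} (M : Matrix (Fin n) (Fin n) ℝ) (a b : Fin n → ℝ) :
    (M *ᵥ a) ⬝ᵥ b = a ⬝ᵥ (Mᵀ *ᵥ b) := by
  rw [dotProduct_comm, dotProduct_mulVec, ← mulVec_transpose, dotProduct_comm,
    dotProduct_mulVec, ← mulVec_transpose, transpose_transpose]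

lemma rayleigh {n : ℕ} [Nonempty (Fin n)] (S : Matrix (Fin n) (Fin n) ℝ)
    (hS : S.IsHermitian) (x : Fin n → ℝ) :
    (⨅ i, hS.eigenvalues i) * (x ⬝ᵥ x) ≤ x ⬝ᵥ S *ᵥ x := by
  set U : Matrix (Fin n) (Fin n) ℝ := (hS.eigenvectorUnitary : Matrix (Fin n) (Fin n) ℝ) with hU
  have hUmem : U ∈ Matrix.unitaryGroup (Fin n) ℝ := (hS.eigenvectorUnitary).2
  have h2 : U * star U = 1 := hUmem.2
  have hstar : star U = Uᵀ := conjTranspose_eq_transpose_of_trivial U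
  set c : Fin n → ℝ := Uᵀ *ᵥ x with hc
  have hcc : c ⬝ᵥ c = x ⬝ᵥ x := by
    rw [hc, mulVec_dot, mulVec_mulVec, transpose_transpose, ← hstar, h2, one_mulVec]
  have hquad : x ⬝ᵥ S *ᵥ x = ∑ i, hS.eigenvalues i * c i ^ 2 := by
    conv_lhs => rw [hS.spectral_theorem]
    rw [Unitary.conjStarAlgAut_apply, ← hU, hstar, ← mulVec_mulVec, ← mulVec_mulVec, dotProduct_comm, mulVec_dot, dotProduct_comm,
      ← hc]
    simp only [mulVec_diagonal, dotProduct, Function.comp]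
    refine Finset.sum_congr rfl fun i _ => ?_
    simp [RCLike.ofReal_real_eq_id]
    ring
  have hxx : x ⬝ᵥ x = ∑ i, c i ^ 2 := by
    rw [← hcc]; simp [dotProduct, sq]
  rw [hquad, hxx, Finset.mul_sum]
  apply Finset.sum_le_sum
  intro i _
  have : (⨅ j, hS.eigenvalues j) ≤ hS.eigenvalues i :=
    ciInf_le (Set.Finite.bddBelow (Set.finite_range _)) i
  nlinarith [sq_nonneg (c i)]

lemma eNorm_eq_sqrt_dot {n : ℕ} (v : Fin n → ℝ) : eNorm v = Real.sqrt (v ⬝ᵥ v) := by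
  simp [eNorm, dotProduct, sq]

lemma abs_le_eNorm {n : ℕ} (v : Fin n → ℝ) (i : Fin n) : |v i| ≤ eNorm v := by
  rw [eNorm, ← Real.sqrt_sq_eq_abs]
  exact Real.sqrt_le_sqrt (Finset.single_le_sum (fun j _ => sq_nonneg (v j))
    (Finset.mem_univ i))

lemma sigma_bound {n : ℕ} [Nonempty (Fin n)] (A : Matrix (Fin n) (Fin n) ℝ)
    (δ : ℝ) (hδ : 0 < δ) (hδσ : δ ≤ sigmaMin A) (w : Fin n → ℝ) :
    δ * eNorm w ≤ eNorm (A *ᵥ w) := by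
  have hμ : δ ^ 2 ≤ ⨅ i, (by simpa using Matrix.isHermitian_conjTranspose_mul_self A :
      (Aᵀ * A).IsHermitian).eigenvalues i := by
    rw [sigmaMin] at hδσ
    rwa [← Real.le_sqrt' hδ]
  have hray := rayleigh (Aᵀ * A) (by simpa using Matrix.isHermitian_conjTranspose_mul_self A :
      (Aᵀ * A).IsHermitian) w
  have hquad : w ⬝ᵥ (Aᵀ * A) *ᵥ w = (A *ᵥ w) ⬝ᵥ (A *ᵥ w) := by
    rw [mulVec_dot, mulVec_mulVec]
  have hww : 0 ≤ w ⬝ᵥ w := by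
    simp only [dotProduct]
    exact Finset.sum_nonneg fun j _ => mul_self_nonneg _
  have h1 : δ ^ 2 * (w ⬝ᵥ w) ≤ (A *ᵥ w) ⬝ᵥ (A *ᵥ w) := by
    rw [← hquad]
    calc δ ^ 2 * (w ⬝ᵥ w) ≤ (⨅ i, (by simpa using Matrix.isHermitian_conjTranspose_mul_self A :
      (Aᵀ * A).IsHermitian).eigenvalues i)
          * (w ⬝ᵥ w) := mul_le_mul_of_nonneg_right hμ hww
      _ ≤ _ := hray
  rw [eNorm_eq_sqrt_dot, eNorm_eq_sqrt_dot]
  calc δ * Real.sqrt (w ⬝ᵥ w) = Real.sqrt (δ ^ 2 * (w ⬝ᵥ w)) := by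
        rw [Real.sqrt_mul (sq_nonneg δ), Real.sqrt_sq hδ.le]
    _ ≤ _ := Real.sqrt_le_sqrt h1

theorem stmt14 {n : ℕ} (hn : 0 < n) (A : Matrix (Fin n) (Fin n) ℝ)
    (hA : IsUnit A) (δ : ℝ) (hδ : 0 < δ) (hδσ : δ ≤ sigmaMin A)
    (b y z xhat : Fin n → ℝ) (hxhat : xhat = y + z) :
    ∀ i, |z i| - δ⁻¹ * eNorm (b - A.mulVec xhat) ≤ |(A⁻¹.mulVec b - y) i| ∧
      |(A⁻¹.mulVec b - y) i| ≤ |z i| + δ⁻¹ * eNorm (b - A.mulVec xhat) := by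
  haveI : Nonempty (Fin n) := ⟨⟨0, hn⟩⟩
  have hAdet : IsUnit A.det := (Matrix.isUnit_iff_isUnit_det A).mp hA
  set r : Fin n → ℝ := b - A *ᵥ xhat with hr
  set w : Fin n → ℝ := A⁻¹ *ᵥ r with hwdef
  have hAr : A *ᵥ w = r := by
    rw [hwdef, mulVec_mulVec, Matrix.mul_nonsing_inv _ hAdet, one_mulVec]
  have hkey : δ * eNorm w ≤ eNorm r := hAr ▸ sigma_bound A δ hδ hδσ w
  have hwle : eNorm w ≤ δ⁻¹ * eNorm r := by
    rw [le_inv_mul_iff₀ hδ]; exact hkey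
  have hdecomp : A⁻¹ *ᵥ b - y = z + w := by
    have hx : A⁻¹ *ᵥ (A *ᵥ xhat) = xhat := by
      rw [mulVec_mulVec, Matrix.nonsing_inv_mul _ hAdet, one_mulVec]
    have : w = A⁻¹ *ᵥ b - xhat := by
      rw [hwdef, hr, mulVec_sub, hx]
    rw [this, hxhat]
    funext i
    simp
    ring
  intro i
  have hwi : |w i| ≤ δ⁻¹ * eNorm r := (abs_le_eNorm w i).trans hwle
  rw [hdecomp]
  have h1 : |z i + w i| ≤ |z i| + |w i| := abs_add_le _ _
  have h2 : |z i| - |w i| ≤ |z i + w i| := by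
    have := abs_sub_abs_le_abs_sub (z i) (-(w i))
    simpa using this
  have hzw : (z + w) i = z i + w i := rfl
  constructor <;> rw [hzw] <;> linarith
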